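/- arXiv:1904.02131 — 12 statements merged into one kernel-verified Lean document; each statement's English description precedes it below -/
import Mathlib

section
/- Let N be a positive integer, let τ be a positive integer with τ ≤ N, and let m ∈ ℝ^N be a vector with nonnegative entries. An (m,τ)-filling-problem solution exists if and only if for every n ∈ {1,…,N}, τ·m[n] ≤ Σ_{i=1}^{N} m[i]. -/
/-!
Necessity is double counting: the loads sum to `τ` times the total weight `W`, and each load is
at most `W`. For sufficiency, normalise to `m ≤ T` and `∑ m = τ * T`, and induct on the ground
set by removing an element `a` of maximal `m a`. The `τ`-sets through `a` are `a` together with a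
`(τ - 1)`-filling of some loads `d` on the rest, of total weight `m a`; the other sets form a
`τ`-filling of `m - d` of total weight `T - m a`. Both subproblems satisfy the hypotheses as soon as
`max 0 (m n - (T - m a)) ≤ d n ≤ m n` and `∑ d = (τ - 1) * m a`, and such `d` is found by
interpolating linearly between these bounds.
-/

open Finset

variable {ι : Type*}

lemma exists_sum_eq_of_sum_le_of_le_sum {s : Finset ι} {l u : ι → ℝ} {c : ℝ}
    (hlu : ∀ i ∈ s, l i ≤ u i) (hl : ∑ i ∈ s, l i ≤ c) (hu : c ≤ ∑ i ∈ s, u i) :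
    ∃ d : ι → ℝ, (∀ i ∈ s, l i ≤ d i ∧ d i ≤ u i) ∧ ∑ i ∈ s, d i = c := by
  set L := ∑ i ∈ s, l i
  set U := ∑ i ∈ s, u i
  -- if `U = L` then `t = 0` (as `x / 0 = 0`), which is still right since then `c = L`
  set t := (c - L) / (U - L)
  have ht0 : 0 ≤ t := div_nonneg (by linarith) (by linarith)
  have ht1 : t ≤ 1 := div_le_one_of_le₀ (by linarith) (by linarith)
  refine ⟨fun i => l i + t * (u i - l i), fun i hi => ?_, ?_⟩
  · have := hlu i hi
    constructor <;> nlinarith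
  · change ∑ i ∈ s, (l i + t * (u i - l i)) = c
    rw [sum_add_distrib, ← mul_sum, sum_sub_distrib]
    change L + t * (U - L) = c
    rcases eq_or_ne (U - L) 0 with h | h
    · rw [h, mul_zero]
      linarith
    · rw [div_mul_cancel₀ _ h]
      ring

lemma sum_max_sub_le {s : Finset ι} {f : ι → ℝ} {K M : ℝ} {k : ℕ} (hK : 0 ≤ K) (hM : 0 ≤ M)
    (hf : ∀ i ∈ s, 0 ≤ f i ∧ f i ≤ K + M) (hsum : ∑ i ∈ s, f i ≤ k * M + (k + 1) * K) :
    ∑ i ∈ s, max (f i - K) 0 ≤ k * M := by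
  set P := {i ∈ s | K < f i}
  have hP : ∑ i ∈ s, max (f i - K) 0 = ∑ i ∈ P, (f i - K) := by
    rw [sum_filter]
    refine sum_congr rfl fun i _ => ?_
    split_ifs with h
    · exact max_eq_left (by linarith)
    · exact max_eq_right (by linarith)
  rw [hP]
  rcases le_or_gt #P k with hk | hk
  · calc ∑ i ∈ P, (f i - K) ≤ ∑ i ∈ P, M :=
          sum_le_sum fun i hi => by linarith [(hf i (filter_subset _ _ hi)).2]
      _ = #P * M := by rw [sum_const, nsmul_eq_mul]
      _ ≤ k * M := by gcongr
  · have hk : (k + 1 : ℝ) ≤ #P := by exact_mod_cast hk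
    have hPs : ∑ i ∈ P, f i ≤ ∑ i ∈ s, f i :=
      sum_le_sum_of_subset_of_nonneg (filter_subset _ _) fun i hi _ => (hf i hi).1
    calc ∑ i ∈ P, (f i - K) = ∑ i ∈ P, f i - #P * K := by
          rw [sum_sub_distrib, sum_const, nsmul_eq_mul]
      _ ≤ k * M := by nlinarith

lemma exists_loads_split {s : Finset ι} {f : ι → ℝ} {M T : ℝ} {k : ℕ} (hM : 0 ≤ M) (hMT : M ≤ T)
    (hf : ∀ i ∈ s, 0 ≤ f i ∧ f i ≤ M) (hsum : M + ∑ i ∈ s, f i = (k + 1) * T) :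
    ∃ d : ι → ℝ, (∀ i ∈ s, 0 ≤ d i ∧ d i ≤ M) ∧ ∑ i ∈ s, d i = k * M ∧
      ∀ i ∈ s, 0 ≤ f i - d i ∧ f i - d i ≤ T - M := by
  have hk : (0 : ℝ) ≤ k := k.cast_nonneg
  obtain ⟨d, hd, hdsum⟩ := exists_sum_eq_of_sum_le_of_le_sum (c := k * M)
    (fun i hi => max_le (by linarith) (hf i hi).1)
    (sum_max_sub_le (K := T - M) (by linarith) hM
      (fun i hi => ⟨(hf i hi).1, by linarith [(hf i hi).2]⟩) (by linarith))
    (by nlinarith)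
  refine ⟨d, fun i hi => ?_, hdsum, fun i hi => ?_⟩ <;>
  · have := hd i hi
    have := hf i hi
    have := le_max_left (f i - (T - M)) 0
    have := le_max_right (f i - (T - M)) 0
    constructor <;> linarith

section

variable [DecidableEq ι]

lemma sum_powersetCard_succ_insert {s : Finset ι} {a : ι} (ha : a ∉ s) (k : ℕ)
    (g : Finset ι → ℝ) :
    ∑ S ∈ (insert a s).powersetCard (k + 1), g S =
      ∑ S ∈ s.powersetCard (k + 1), g S + ∑ S ∈ s.powersetCard k, g (insert a S) := by
  rw [powersetCard_succ_insert ha, sum_union, sum_image]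
  · exact fun S hS S' hS' h => by
      rw [← erase_insert (notMem_mono (mem_powersetCard.1 hS).1 ha),
        ← erase_insert (notMem_mono (mem_powersetCard.1 hS').1 ha)]
      exact congrArg (·.erase a) h
  · refine disjoint_left.2 fun S hS hS' => ?_
    obtain ⟨S', -, rfl⟩ := mem_image.1 hS'
    exact notMem_mono (mem_powersetCard.1 hS).1 ha (mem_insert_self a S')

/-- `α` solves the `(m, τ)`-filling problem on `A`, with total weight `T`. -/
structure IsFilling (A : Finset ι) (τ : ℕ) (T : ℝ) (m : ι → ℝ) (α : Finset ι → ℝ) : Prop where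
  nonneg : ∀ S, 0 ≤ α S
  sum_eq : ∑ S ∈ A.powersetCard τ, α S = T
  load_eq : ∀ n ∈ A, ∑ S ∈ A.powersetCard τ with n ∈ S, α S = m n

lemma isFilling_zero {A : Finset ι} {T : ℝ} {m : ι → ℝ} (hT : 0 ≤ T) (hm : ∀ n ∈ A, m n = 0) :
    IsFilling A 0 T m fun _ => T where
  nonneg _ := hT
  sum_eq := by simp
  load_eq n hn := by simp [hm n hn]

lemma isFilling_empty (k : ℕ) (m : ι → ℝ) : IsFilling ∅ (k + 1) 0 m 0 where
  nonneg _ := le_rfl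
  sum_eq := by simp
  load_eq n hn := absurd hn (notMem_empty n)

lemma isFilling_insert {s : Finset ι} {a : ι} {k : ℕ} {T : ℝ} {m d : ι → ℝ}
    {β γ : Finset ι → ℝ} (ha : a ∉ s) (hβ : IsFilling s k (m a) d β)
    (hγ : IsFilling s (k + 1) (T - m a) (m - d) γ) :
    IsFilling (insert a s) (k + 1) T m fun S => if a ∈ S then β (S.erase a) else γ S := by
  set α : Finset ι → ℝ := fun S => if a ∈ S then β (S.erase a) else γ S
  have hout : ∀ j, ∀ S ∈ s.powersetCard j, a ∉ S := fun j S hS =>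
    notMem_mono (mem_powersetCard.1 hS).1 ha
  have hγα : ∀ S ∈ s.powersetCard (k + 1), α S = γ S := fun S hS => if_neg (hout _ S hS)
  have hβα : ∀ S ∈ s.powersetCard k, α (insert a S) = β S := fun S hS => by
    simp only [α, if_pos (mem_insert_self a S), erase_insert (hout _ S hS)]
  refine ⟨fun S => ?_, ?_, fun n hn => ?_⟩
  · simp only [α]
    split_ifs
    exacts [hβ.nonneg _, hγ.nonneg _]
  · rw [sum_powersetCard_succ_insert ha, sum_congr rfl hγα, sum_congr rfl hβα, hγ.sum_eq,
      hβ.sum_eq, sub_add_cancel]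
  · rw [sum_filter, sum_powersetCard_succ_insert ha]
    rcases mem_insert.1 hn with rfl | hn
    · rw [sum_eq_zero fun S hS => if_neg (hout _ S hS), zero_add, ← hβ.sum_eq]
      exact sum_congr rfl fun S hS => by rw [if_pos (mem_insert_self n S), hβα S hS]
    · have hna : n ≠ a := ne_of_mem_of_not_mem hn ha
      have hγn : ∑ S ∈ s.powersetCard (k + 1), (if n ∈ S then α S else 0) = m n - d n := by
        rw [← Pi.sub_apply, ← hγ.load_eq n hn, sum_filter]
        exact sum_congr rfl fun S hS => by rw [hγα S hS]
      have hβn : ∑ S ∈ s.powersetCard k, (if n ∈ insert a S then α (insert a S) else 0) = d n := by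
        rw [← hβ.load_eq n hn, sum_filter]
        exact sum_congr rfl fun S hS => by
          simp only [mem_insert, hna, false_or, hβα S hS]
      rw [hγn, hβn, sub_add_cancel]

theorem exists_isFilling (A : Finset ι) (τ : ℕ) (T : ℝ) (m : ι → ℝ) (hT : 0 ≤ T)
    (hm : ∀ n ∈ A, 0 ≤ m n ∧ m n ≤ T) (hsum : ∑ n ∈ A, m n = τ * T) :
    ∃ α, IsFilling A τ T m α := by
  induction A using Finset.strongInduction generalizing τ T m with
  | H A ih =>
  rcases τ with _ | k
  · rw [Nat.cast_zero, zero_mul, sum_eq_zero_iff_of_nonneg fun n hn => (hm n hn).1] at hsum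
    exact ⟨_, isFilling_zero hT hsum⟩
  rcases A.eq_empty_or_nonempty with rfl | hA
  · rw [sum_empty, eq_comm, mul_eq_zero] at hsum
    obtain rfl : T = 0 := hsum.resolve_left (by positivity)
    exact ⟨0, isFilling_empty k m⟩
  obtain ⟨a, ha, hmax⟩ := exists_max_image A m hA
  obtain ⟨s, has, rfl⟩ : ∃ s, a ∉ s ∧ A = insert a s :=
    ⟨A.erase a, notMem_erase a A, (insert_erase ha).symm⟩
  rw [sum_insert has, Nat.cast_add_one] at hsum
  obtain ⟨d, hd, hdsum, hmd⟩ := exists_loads_split (hm a ha).1 (hm a ha).2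
    (fun n hn => ⟨(hm n (mem_insert_of_mem hn)).1, hmax n (mem_insert_of_mem hn)⟩) hsum
  obtain ⟨β, hβ⟩ := ih s (ssubset_insert has) k (m a) d (hm a ha).1 hd hdsum
  obtain ⟨γ, hγ⟩ := ih s (ssubset_insert has) (k + 1) (T - m a) (m - d)
    (by linarith [(hm a ha).2]) hmd
    (by simp only [Pi.sub_apply, sum_sub_distrib, hdsum]; push_cast; linarith)
  exact ⟨_, isFilling_insert has hβ hγ⟩

lemma sum_sum_powersetCard_filter_mem (A : Finset ι) (τ : ℕ) (α : Finset ι → ℝ) :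
    ∑ n ∈ A, ∑ S ∈ A.powersetCard τ with n ∈ S, α S = τ * ∑ S ∈ A.powersetCard τ, α S := by
  simp_rw [sum_filter]
  rw [sum_comm, mul_sum]
  refine sum_congr rfl fun S hS => ?_
  obtain ⟨hSA, hScard⟩ := mem_powersetCard.1 hS
  rw [sum_ite_mem, inter_eq_right.2 hSA, sum_const, hScard, nsmul_eq_mul]

end

theorem stmt_1_general (N τ : ℕ) (hτ : 0 < τ)
    (m : Fin N → ℝ) (hm : ∀ n, 0 ≤ m n) :
    (∃ α : Finset (Fin N) → ℝ, (∀ S, 0 ≤ α S) ∧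
      ∀ n : Fin N,
        ∑ S ∈ (Finset.univ.powersetCard τ).filter (fun S => n ∈ S), α S = m n) ↔
    (∀ n : Fin N, (τ : ℝ) * m n ≤ ∑ i, m i) := by
  have hτ' : (0 : ℝ) < τ := by exact_mod_cast hτ
  constructor
  · rintro ⟨α, hα, hload⟩ n
    have hle : m n ≤ ∑ S ∈ univ.powersetCard τ, α S :=
      hload n ▸ sum_le_sum_of_subset_of_nonneg (filter_subset _ _) fun S _ _ => hα S
    calc (τ : ℝ) * m n ≤ τ * ∑ S ∈ univ.powersetCard τ, α S := by gcongr
      _ = ∑ i, m i := by simp_rw [← hload]; exact (sum_sum_powersetCard_filter_mem _ _ _).symm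
  · intro h
    obtain ⟨α, hα⟩ := exists_isFilling univ τ ((∑ i, m i) / τ) m
      (div_nonneg (sum_nonneg fun i _ => hm i) hτ'.le)
      (fun n _ => ⟨hm n, (le_div_iff₀ hτ').2 (by linarith [h n])⟩) (by field_simp)
    exact ⟨α, hα.nonneg, fun n => hα.load_eq n (mem_univ n)⟩

theorem stmt_1 (N τ : ℕ) (hN : 0 < N) (hτ : 0 < τ) (hτN : τ ≤ N)
    (m : Fin N → ℝ) (hm : ∀ n, 0 ≤ m n) :
    (∃ α : Finset (Fin N) → ℝ, (∀ S, 0 ≤ α S) ∧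
      ∀ n : Fin N,
        ∑ S ∈ (Finset.univ.powersetCard τ).filter (fun S => n ∈ S), α S = m n) ↔
    (∀ n : Fin N, (τ : ℝ) * m n ≤ ∑ i, m i) :=
  stmt_1_general N τ hτ m hm
end

section
/- Let N be a positive integer, let τ be a positive integer with τ ≤ N, and let m ∈ ℝ^N be a vector with nonnegative entries. If for every n ∈ {1,…,N} one has τ·m[n] ≤ Σ_{i=1}^{N} m[i], then an (m,τ)-filling-problem solution exists. -/
/-!
Greedy peeling. Write `T = ∑ i, m i` and call `n` tight when `τ * m n = T`. When `T > 0`, at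
most `τ` coordinates are tight and at least `τ` are nonzero, so some `τ`-set `S` contains every
tight coordinate and only nonzero ones. Subtracting `t • 𝟙_S` preserves the hypotheses as long as
`t ≤ m n` on `S` and `τ * (m n + t) ≤ T` off `S`; the largest such `t` either zeroes a coordinate
of `S` or makes a coordinate outside `S` tight, while no coordinate becomes nonzero or stops being
tight. Hence the process ends at `m = 0` after finitely many steps.
-/

open Finset

namespace FillingProblem

variable {ι : Type*} [Fintype ι] {τ : ℕ} {m : ι → ℝ} {S : Finset ι} {t : ℝ}

def HasSolution [DecidableEq ι] (τ : ℕ) (m : ι → ℝ) : Prop :=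
  ∃ α : Finset ι → ℝ, (∀ S, 0 ≤ α S) ∧
    ∀ n, ∑ S ∈ (univ.powersetCard τ).filter (fun S => n ∈ S), α S = m n

structure IsAdmissible (τ : ℕ) (m : ι → ℝ) : Prop where
  nonneg : ∀ n, 0 ≤ m n
  le_sum : ∀ n, (τ : ℝ) * m n ≤ ∑ i, m i

def peel [DecidableEq ι] (S : Finset ι) (t : ℝ) (m : ι → ℝ) (n : ι) : ℝ :=
  m n - if n ∈ S then t else 0

noncomputable def tight (τ : ℕ) (m : ι → ℝ) : Finset ι := {n | (τ : ℝ) * m n = ∑ i, m i}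

noncomputable def support (m : ι → ℝ) : Finset ι := {n | m n ≠ 0}

@[simp] lemma mem_support {n : ι} : n ∈ support m ↔ m n ≠ 0 := by simp [support]

@[simp] lemma mem_tight {n : ι} : n ∈ tight τ m ↔ (τ : ℝ) * m n = ∑ i, m i := by simp [tight]

noncomputable def defect [DecidableEq ι] (τ : ℕ) (m : ι → ℝ) : ℕ :=
  #(support m) + #(tight τ m)ᶜ

lemma hasSolution_zero [DecidableEq ι] : HasSolution τ (0 : ι → ℝ) :=
  ⟨0, fun _ => le_rfl, fun _ => by simp⟩

lemma HasSolution.of_peel [DecidableEq ι] (h : HasSolution τ (peel S t m)) (ht : 0 ≤ t)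
    (hS : #S = τ) : HasSolution τ m := by
  obtain ⟨α, hα, hαm⟩ := h
  have hSmem : S ∈ univ.powersetCard τ := mem_powersetCard.2 ⟨subset_univ S, hS⟩
  refine ⟨fun S' => α S' + if S' = S then t else 0, fun S' => ?_, fun n => ?_⟩
  · have := hα S'
    dsimp only
    split_ifs <;> linarith
  · rw [sum_add_distrib, hαm n, sum_ite_eq', peel]
    by_cases hn : n ∈ S <;> simp [hn, hSmem]

lemma sum_peel [DecidableEq ι] : ∑ i, peel S t m i = ∑ i, m i - #S * t := by
  simp [peel, sum_sub_distrib, sum_ite_mem]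

lemma card_tight_le (hm : ∀ n, 0 ≤ m n) (hT : 0 < ∑ i, m i) :
    #(tight τ m) ≤ τ := by
  have key : #(tight τ m) * ∑ i, m i ≤ τ * ∑ i, m i :=
    calc #(tight τ m) * ∑ i, m i = ∑ n ∈ tight τ m, ∑ i, m i := by rw [sum_const, nsmul_eq_mul]
      _ = ∑ n ∈ tight τ m, (τ : ℝ) * m n := sum_congr rfl fun n hn => (mem_tight.1 hn).symm
      _ = τ * ∑ n ∈ tight τ m, m n := by rw [mul_sum]
      _ ≤ τ * ∑ i, m i := mul_le_mul_of_nonneg_left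
          (sum_le_sum_of_subset_of_nonneg (subset_univ _) fun i _ _ => hm i) τ.cast_nonneg
  exact_mod_cast le_of_mul_le_mul_right key hT

lemma le_card_support (hcond : ∀ n, (τ : ℝ) * m n ≤ ∑ i, m i) (hT : 0 < ∑ i, m i) :
    τ ≤ #(support m) := by
  have key : τ * ∑ i, m i ≤ #(support m) * ∑ i, m i :=
    calc τ * ∑ i, m i = ∑ n ∈ support m, (τ : ℝ) * m n := by
          rw [← mul_sum, support, sum_filter_ne_zero]
      _ ≤ ∑ n ∈ support m, ∑ i, m i := sum_le_sum fun n _ => hcond n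
      _ = #(support m) * ∑ i, m i := by rw [sum_const, nsmul_eq_mul]
  exact_mod_cast le_of_mul_le_mul_right key hT

lemma tight_subset_support (hT : 0 < ∑ i, m i) : tight τ m ⊆ support m :=
  fun n hn => mem_support.2 fun h => by
    rw [mem_tight, h, mul_zero] at hn
    exact hT.ne hn

lemma IsAdmissible.exists_tight_subset_card_eq (hm : IsAdmissible τ m) (hT : 0 < ∑ i, m i) :
    ∃ S, tight τ m ⊆ S ∧ S ⊆ support m ∧ #S = τ :=
  exists_subsuperset_card_eq (tight_subset_support hT) (card_tight_le hm.nonneg hT)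
    (le_card_support hm.le_sum hT)

lemma isAdmissible_peel [DecidableEq ι] (hm : IsAdmissible τ m) (hS : #S = τ)
    (hin : ∀ n ∈ S, t ≤ m n) (hout : ∀ n ∉ S, τ * (m n + t) ≤ ∑ i, m i) :
    IsAdmissible τ (peel S t m) where
  nonneg n := by
    by_cases hn : n ∈ S
    · simpa [peel, hn] using hin n hn
    · simpa [peel, hn] using hm.nonneg n
  le_sum n := by
    rw [sum_peel, hS]
    by_cases hn : n ∈ S
    · simp only [peel, hn, if_true]
      linarith [hm.le_sum n]
    · simp only [peel, hn, if_false, sub_zero]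
      linarith [hout n hn]

lemma defect_peel_lt [DecidableEq ι] (hS : #S = τ) (htS : tight τ m ⊆ S)
    (hSsupp : S ⊆ support m) {n₀ : ι}
    (hn₀ : (n₀ ∈ S ∧ t = m n₀) ∨ (n₀ ∉ S ∧ τ * (m n₀ + t) = ∑ i, m i)) :
    defect τ (peel S t m) < defect τ m := by
  have hsupp : support (peel S t m) ⊆ support m := by
    intro n hn
    by_cases hnS : n ∈ S
    · exact hSsupp hnS
    · simpa [peel, hnS] using hn
  have htight : tight τ m ⊆ tight τ (peel S t m) := by
    intro n hn
    have hnS := htS hn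
    rw [mem_tight] at hn ⊢
    rw [sum_peel, hS, peel, if_pos hnS, mul_sub, hn]
  unfold defect
  rcases hn₀ with ⟨hn₀S, rfl⟩ | ⟨hn₀S, hn₀⟩
  · have : support (peel S (m n₀) m) ⊂ support m :=
      (ssubset_iff_of_subset hsupp).2 ⟨n₀, hSsupp hn₀S, by simp [peel, hn₀S]⟩
    have := card_lt_card this
    have := card_le_card (compl_subset_compl.2 htight)
    omega
  · have : tight τ m ⊂ tight τ (peel S t m) := by
      refine (ssubset_iff_of_subset htight).2 ⟨n₀, ?_, fun h => hn₀S (htS h)⟩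
      rw [mem_tight, sum_peel, hS, peel, if_neg hn₀S, ← hn₀]
      ring
    have := card_lt_card (compl_ssubset_compl.2 this)
    have := card_le_card hsupp
    omega

lemma IsAdmissible.exists_peel [DecidableEq ι] (hτ : 0 < τ) (hm : IsAdmissible τ m)
    (hT : 0 < ∑ i, m i) :
    ∃ S t, #S = τ ∧ 0 ≤ t ∧ IsAdmissible τ (peel S t m) ∧ defect τ (peel S t m) < defect τ m := by
  obtain ⟨S, htS, hSsupp, hS⟩ := hm.exists_tight_subset_card_eq hT
  have hτ' : (0 : ℝ) < τ := by exact_mod_cast hτ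
  let f n := if n ∈ S then m n else (∑ i, m i) / τ - m n
  have hne : (univ : Finset ι).Nonempty := (card_pos.1 (hS ▸ hτ)).mono (subset_univ S)
  obtain ⟨n₀, -, hn₀⟩ := exists_min_image univ f hne
  have hf : 0 ≤ f n₀ := by
    by_cases h : n₀ ∈ S
    · simpa [f, h] using hm.nonneg n₀
    · simpa [f, h, le_div_iff₀ hτ', mul_comm] using hm.le_sum n₀
  have hin : ∀ n ∈ S, f n₀ ≤ m n := fun n hn => by simpa [f, hn] using hn₀ n (mem_univ n)
  have hout : ∀ n ∉ S, τ * (m n + f n₀) ≤ ∑ i, m i := fun n hn => by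
    have := hn₀ n (mem_univ n)
    simp only [f, hn, if_false] at this
    rw [← le_div_iff₀' hτ']
    linarith
  refine ⟨S, f n₀, hS, hf, isAdmissible_peel hm hS hin hout,
    defect_peel_lt hS htS hSsupp (n₀ := n₀) ?_⟩
  by_cases h : n₀ ∈ S
  · exact .inl ⟨h, by simp [f, h]⟩
  · refine .inr ⟨h, ?_⟩
    simp only [f, h, if_false]
    field_simp
    ring

theorem IsAdmissible.hasSolution [DecidableEq ι] (hτ : 0 < τ) (hm : IsAdmissible τ m) :
    HasSolution τ m := by
  induction hd : defect τ m using Nat.strong_induction_on generalizing m with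
  | _ d ih =>
  subst hd
  rcases (sum_nonneg fun i _ => hm.nonneg i).eq_or_lt with hT | hT
  · obtain rfl : m = 0 := funext fun n =>
      (sum_eq_zero_iff_of_nonneg fun i _ => hm.nonneg i).1 hT.symm n (mem_univ n)
    exact hasSolution_zero
  obtain ⟨S, t, hS, ht, hpeel, hlt⟩ := hm.exists_peel hτ hT
  exact (ih _ hlt hpeel rfl).of_peel ht hS

end FillingProblem

theorem stmt_3_general (N τ : ℕ) (hτ : 0 < τ)
    (m : Fin N → ℝ) (hm : ∀ n, 0 ≤ m n)
    (hcond : ∀ n : Fin N, (τ : ℝ) * m n ≤ ∑ i, m i) :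
    ∃ α : Finset (Fin N) → ℝ, (∀ S, 0 ≤ α S) ∧
      ∀ n : Fin N,
        ∑ S ∈ (Finset.univ.powersetCard τ).filter (fun S => n ∈ S), α S = m n :=
  FillingProblem.IsAdmissible.hasSolution hτ ⟨hm, hcond⟩

theorem stmt_3 (N τ : ℕ) (hN : 0 < N) (hτ : 0 < τ) (hτN : τ ≤ N)
    (m : Fin N → ℝ) (hm : ∀ n, 0 ≤ m n)
    (hcond : ∀ n : Fin N, (τ : ℝ) * m n ≤ ∑ i, m i) :
    ∃ α : Finset (Fin N) → ℝ, (∀ S, 0 ≤ α S) ∧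
      ∀ n : Fin N,
        ∑ S ∈ (Finset.univ.powersetCard τ).filter (fun S => n ∈ S), α S = m n :=
  stmt_3_general N τ hτ m hm hcond
end

section
/- Let N be a positive integer and let μ ∈ ℝ^N satisfy 0 ≤ μ[n] ≤ 1 for all n ∈ {1,…,N}. Suppose t := Σ_{n=1}^{N} μ[n] is a positive integer. Then a (μ,t)-filling-problem solution exists; consequently a capacity-achieving storage placement for the heterogeneous storage-constrained PIR problem with storage vector μ exists. -/
/-!
The vectors `μ` with `0 ≤ μ ≤ 1` and `∑ μ = t` form the hypersimplex, a compact convex set, so by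
Krein–Milman it is the convex hull of its extreme points. An extreme point has no fractional
coordinate: if `μ i ∈ (0, 1)`, integrality of `∑ μ` forces a second fractional coordinate `μ j`,
and `μ` is the midpoint of `μ ± ε (eᵢ - eⱼ)`. So the extreme points are the indicators of
`t`-subsets, each of which is trivially filled, and the fillable vectors form a convex set.
-/

open Finset

variable {ι : Type*} [Fintype ι]

def hypersimplex (t : ℕ) : Set (ι → ℝ) := Set.Icc 0 1 ∩ {μ | ∑ n, μ n = t}

def fillable [DecidableEq ι] (t : ℕ) : Set (ι → ℝ) :=
  {m | ∃ α : Finset ι → ℝ, (∀ S, 0 ≤ α S) ∧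
    ∀ n, ∑ S ∈ (univ.powersetCard t).filter (fun S => n ∈ S), α S = m n}

theorem convex_fillable [DecidableEq ι] (t : ℕ) : Convex ℝ (fillable (ι := ι) t) := by
  rintro x ⟨α, hα0, hα⟩ y ⟨β, hβ0, hβ⟩ a b ha hb -
  refine ⟨a • α + b • β, fun S => ?_, fun n => ?_⟩
  · simp only [Pi.add_apply, Pi.smul_apply, smul_eq_mul]
    exact add_nonneg (mul_nonneg ha (hα0 S)) (mul_nonneg hb (hβ0 S))
  · simp only [Pi.add_apply, Pi.smul_apply, smul_eq_mul, sum_add_distrib, ← mul_sum, hα, hβ]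

theorem indicator_mem_fillable [DecidableEq ι] {S : Finset ι} :
    (fun n => if n ∈ S then (1 : ℝ) else 0) ∈ fillable #S := by
  refine ⟨fun T => if T = S then 1 else 0, fun T => by positivity, fun n => ?_⟩
  rw [sum_ite_eq']
  simp

theorem isCompact_hypersimplex (t : ℕ) : IsCompact (hypersimplex (ι := ι) t) :=
  isCompact_Icc.inter_right (isClosed_eq (by fun_prop) continuous_const)

theorem convex_hypersimplex (t : ℕ) : Convex ℝ (hypersimplex (ι := ι) t) := by
  refine (convex_Icc 0 1).inter ?_
  rintro x hx y hy a b - - hab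
  simp only [Set.mem_ofPred_eq, Pi.add_apply, Pi.smul_apply, smul_eq_mul, sum_add_distrib,
    ← mul_sum] at hx hy ⊢
  rw [hx, hy, ← add_mul, hab, one_mul]

theorem exists_ne_mem_Ioo_of_mem_hypersimplex {t : ℕ} {μ : ι → ℝ}
    (hμ : μ ∈ hypersimplex t) {i : ι} (hi : μ i ∈ Set.Ioo 0 1) :
    ∃ j ≠ i, μ j ∈ Set.Ioo 0 1 := by
  classical
  by_contra! hbin
  obtain ⟨⟨h0, h1⟩, hsum : ∑ n, μ n = t⟩ := hμ
  have hboole : ∀ j ∈ univ.erase i, μ j = if μ j = 1 then 1 else 0 := by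
    intro j hj
    have := hbin j (ne_of_mem_erase hj)
    split_ifs with hj1
    · exact hj1
    · by_contra hj0
      exact this ⟨lt_of_le_of_ne (h0 j) (Ne.symm hj0), lt_of_le_of_ne (h1 j) hj1⟩
  have hμi : μ i = ((t - #{j ∈ univ.erase i | μ j = 1} : ℤ) : ℝ) := by
    rw [← add_sum_erase _ _ (mem_univ i), sum_congr rfl hboole, sum_boole] at hsum
    push_cast
    linarith
  rw [hμi] at hi
  obtain ⟨hpos, hlt⟩ := hi
  have : (0 : ℤ) < t - #{j ∈ univ.erase i | μ j = 1} := by exact_mod_cast hpos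
  have : (t - #{j ∈ univ.erase i | μ j = 1} : ℤ) < 1 := by exact_mod_cast hlt
  omega

theorem add_smul_single_sub_single_mem_hypersimplex [DecidableEq ι] {t : ℕ} {μ : ι → ℝ}
    (hμ : μ ∈ hypersimplex t) {i j : ι} (hij : i ≠ j) {c : ℝ}
    (hi : μ i + c ∈ Set.Icc 0 1) (hj : μ j - c ∈ Set.Icc 0 1) :
    μ + c • (Pi.single i 1 - Pi.single j 1 : ι → ℝ) ∈ hypersimplex t := by
  obtain ⟨hbox, hsum⟩ := hμ
  have hcoord : ∀ n, (μ + c • (Pi.single i 1 - Pi.single j 1 : ι → ℝ)) n ∈ Set.Icc 0 1 := by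
    intro n
    rcases eq_or_ne n i with rfl | hni
    · simpa [hij] using hi
    rcases eq_or_ne n j with rfl | hnj
    · simpa [hni, sub_eq_add_neg] using hj
    simpa [hni, hnj] using ⟨hbox.1 n, hbox.2 n⟩
  refine ⟨⟨fun n => (hcoord n).1, fun n => (hcoord n).2⟩, ?_⟩
  simp only [Set.mem_ofPred_eq] at hsum ⊢
  simp [sum_add_distrib, ← mul_sum, sum_sub_distrib, hsum]

theorem eq_zero_or_one_of_mem_extremePoints_hypersimplex {t : ℕ} {μ : ι → ℝ}
    (hμ : μ ∈ (hypersimplex t).extremePoints ℝ) (i : ι) : μ i = 0 ∨ μ i = 1 := by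
  classical
  obtain ⟨hμH, hext⟩ := mem_extremePoints.1 hμ
  by_contra! hfrac
  have hi : μ i ∈ Set.Ioo 0 1 :=
    ⟨lt_of_le_of_ne (hμH.1.1 i) hfrac.1.symm, lt_of_le_of_ne (hμH.1.2 i) hfrac.2⟩
  obtain ⟨j, hji, hj⟩ := exists_ne_mem_Ioo_of_mem_hypersimplex hμH hi
  set ε := min (min (μ i) (1 - μ i)) (min (μ j) (1 - μ j))
  have hε : 0 < ε := by
    simp only [ε, lt_min_iff, sub_pos]
    exact ⟨hi, hj⟩
  have hεi : ε ≤ μ i ∧ ε ≤ 1 - μ i := le_min_iff.1 (min_le_left _ _)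
  have hεj : ε ≤ μ j ∧ ε ≤ 1 - μ j := le_min_iff.1 (min_le_right _ _)
  set v : ι → ℝ := Pi.single i 1 - Pi.single j 1
  have hperturb : ∀ c, |c| ≤ ε → μ + c • v ∈ hypersimplex t := by
    intro c hc
    obtain ⟨hc₁, hc₂⟩ := abs_le.1 hc
    exact add_smul_single_sub_single_mem_hypersimplex hμH hji.symm
      ⟨by linarith, by linarith⟩ ⟨by linarith, by linarith⟩
  have hmid : μ ∈ openSegment ℝ (μ + ε • v) (μ + (-ε) • v) := by
    simpa only [neg_smul, ← sub_eq_add_neg] using mem_openSegment_add_sub (𝕜 := ℝ) μ (ε • v)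
  have hfix := congrFun (hext _ (hperturb ε (abs_of_pos hε).le) _
    (hperturb (-ε) (by rw [abs_neg, abs_of_pos hε])) hmid).1 i
  simp [v, hji.symm] at hfix
  exact hε.ne' hfix

theorem finite_extremePoints_hypersimplex (t : ℕ) :
    ((hypersimplex (ι := ι) t).extremePoints ℝ).Finite :=
  (Set.Finite.pi' fun _ => Set.toFinite ({0, 1} : Set ℝ)).subset
    fun _ hμ n => eq_zero_or_one_of_mem_extremePoints_hypersimplex hμ n

theorem extremePoints_hypersimplex_subset_fillable [DecidableEq ι] (t : ℕ) :
    (hypersimplex (ι := ι) t).extremePoints ℝ ⊆ fillable t := by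
  intro μ hμ
  set S : Finset ι := {n | μ n = 1}
  have hμS : μ = fun n => if n ∈ S then 1 else 0 := by
    ext n
    rcases eq_zero_or_one_of_mem_extremePoints_hypersimplex hμ n with h | h <;> simp [S, h]
  have hS : #S = t := by
    have hsum : ∑ n, μ n = t := (extremePoints_subset hμ).2
    rw [hμS] at hsum
    simpa using hsum
  rw [hμS, ← hS]
  exact indicator_mem_fillable

theorem hypersimplex_subset_fillable [DecidableEq ι] (t : ℕ) :
    hypersimplex t ⊆ fillable (ι := ι) t := by
  rw [← closure_convexHull_extremePoints (isCompact_hypersimplex t) (convex_hypersimplex t),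
    ((finite_extremePoints_hypersimplex t).isClosed_convexHull (𝕜 := ℝ)).closure_eq]
  exact convexHull_min (extremePoints_hypersimplex_subset_fillable t) (convex_fillable t)

theorem stmt_5_general (N : ℕ) (μ : Fin N → ℝ)
    (hμ0 : ∀ n, 0 ≤ μ n) (hμ1 : ∀ n, μ n ≤ 1)
    (t : ℕ) (hts : (t : ℝ) = ∑ n, μ n) :
    ∃ α : Finset (Fin N) → ℝ, (∀ S, 0 ≤ α S) ∧
      ∀ n : Fin N,
        ∑ S ∈ (Finset.univ.powersetCard t).filter (fun S => n ∈ S), α S = μ n :=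
  hypersimplex_subset_fillable t ⟨⟨hμ0, hμ1⟩, hts.symm⟩

theorem stmt_5 (N : ℕ) (hN : 0 < N) (μ : Fin N → ℝ)
    (hμ0 : ∀ n, 0 ≤ μ n) (hμ1 : ∀ n, μ n ≤ 1)
    (t : ℕ) (ht : 0 < t) (hts : (t : ℝ) = ∑ n, μ n) :
    ∃ α : Finset (Fin N) → ℝ, (∀ S, 0 ≤ α S) ∧
      ∀ n : Fin N,
        ∑ S ∈ (Finset.univ.powersetCard t).filter (fun S => n ∈ S), α S = μ n :=
  stmt_5_general N μ hμ0 hμ1 t hts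
end

section
/- Let N be a positive integer and let μ ∈ ℝ^N satisfy 0 ≤ μ[n] ≤ 1 for all n ∈ {1,…,N}. Suppose t := Σ_{n=1}^{N} μ[n] is a positive integer. Then there exists a (μ,t)-filling-problem solution in which at most N of the coefficients α_S are nonzero; that is, there exist an integer F ≤ N, t-element subsets 𝒩_1, …, 𝒩_F of {1,…,N}, and positive reals α_1, …, α_F such that for every n ∈ {1,…,N}, Σ_{f : n ∈ 𝒩_f} α_f = μ[n]. -/
/-!
Greedy peeling. Pick a `t`-set `S` containing every coordinate equal to `1` and contained in the
support of `μ`, and let `a` be the largest weight with `μ - a • 1_S ∈ (1 - a) • [0, 1]ᴺ`. Then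
`μ = a • 1_S + (1 - a) • ν` where `ν` again lies in `[0, 1]ᴺ`, sums to `t`, and has at least one
fractional coordinate fewer than `μ`. A vector with integral coordinate sum cannot have exactly one
fractional coordinate, so starting from `k` fractional coordinates one reaches a `0/1` vector, the
indicator of a `t`-set, after at most `k - 1` steps: at most `max k 1 ≤ N` sets are used.
-/

open Finset

variable {ι : Type*} [DecidableEq ι]

def HasFilling (t F : ℕ) (μ : ι → ℝ) : Prop :=
  ∃ (𝒩 : Fin F → Finset ι) (α : Fin F → ℝ), (∀ f, (𝒩 f).card = t) ∧ (∀ f, 0 < α f) ∧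
    ∀ n, ∑ f ∈ univ.filter (fun f => n ∈ 𝒩 f), α f = μ n

theorem hasFilling_one {S : Finset ι} {t : ℕ} (hS : #S = t) :
    HasFilling t 1 (fun n => if n ∈ S then 1 else 0) :=
  ⟨fun _ => S, fun _ => 1, fun _ => hS, fun _ => one_pos, fun n => by
    by_cases h : n ∈ S <;> simp [h]⟩

theorem HasFilling.cons {t F : ℕ} {ν : ι → ℝ} {S : Finset ι} {a c : ℝ}
    (h : HasFilling t F ν) (hS : #S = t) (ha : 0 < a) (hc : 0 < c) :
    HasFilling t (F + 1) (fun n => (if n ∈ S then a else 0) + c * ν n) := by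
  obtain ⟨𝒩, α, hcard, hpos, hsum⟩ := h
  refine ⟨Fin.cons S 𝒩, Fin.cons a (c * α ·), Fin.cases hS hcard,
    Fin.cases ha fun f => mul_pos hc (hpos f), fun n => ?_⟩
  simp only [← hsum n, sum_filter, Fin.sum_univ_succ, mul_sum, mul_ite, mul_zero,
    Fin.cons_zero, Fin.cons_succ]

section pointwise

variable {μ : ι → ℝ} {S : Finset ι} {a : ℝ} {n : ι}

def slack (μ : ι → ℝ) (S : Finset ι) (n : ι) : ℝ := if n ∈ S then μ n else 1 - μ n

theorem slack_mem_Ioo (hμ0 : 0 ≤ μ n) (hμ1 : μ n ≤ 1)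
    (h0 : μ n ≠ 0) (h1 : μ n ≠ 1) : slack μ S n ∈ Set.Ioo 0 1 := by
  have := lt_of_le_of_ne hμ0 (Ne.symm h0)
  have := lt_of_le_of_ne hμ1 h1
  unfold slack
  split_ifs <;> constructor <;> linarith

noncomputable def peel (μ : ι → ℝ) (S : Finset ι) (a : ℝ) (n : ι) : ℝ :=
  (μ n - if n ∈ S then a else 0) / (1 - a)

theorem add_mul_peel (ha : a ≠ 1) :
    (if n ∈ S then a else 0) + (1 - a) * peel μ S a n = μ n := by
  rw [peel, mul_div_cancel₀ _ (sub_ne_zero.mpr ha.symm)]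
  ring

theorem peel_mem_Icc (ha : a < 1) (hμ0 : 0 ≤ μ n) (hμ1 : μ n ≤ 1) (hslack : a ≤ slack μ S n) :
    peel μ S a n ∈ Set.Icc 0 1 := by
  have h1a : 0 < 1 - a := sub_pos.mpr ha
  rw [peel, Set.mem_Icc, div_le_one h1a]
  unfold slack at hslack
  split_ifs at hslack ⊢
  · exact ⟨div_nonneg (by linarith) h1a.le, by linarith⟩
  · exact ⟨div_nonneg (by linarith) h1a.le, by linarith⟩

theorem peel_eq_zero_or_one (ha : a ≠ 1) (hslack : slack μ S n = a) :
    peel μ S a n = 0 ∨ peel μ S a n = 1 := by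
  have h1a : 1 - a ≠ 0 := sub_ne_zero.mpr ha.symm
  unfold slack at hslack
  split_ifs at hslack with h
  · left; simp [peel, h, hslack]
  · right; rw [peel, if_neg h, sub_zero, div_eq_one_iff_eq h1a]; linarith

theorem peel_eq_zero (hn : n ∉ S) (h : μ n = 0) : peel μ S a n = 0 := by
  simp [peel, hn, h]

theorem peel_eq_one (ha : a ≠ 1) (hn : n ∈ S) (h : μ n = 1) : peel μ S a n = 1 := by
  rw [peel, if_pos hn, h, div_self (sub_ne_zero.mpr ha.symm)]

end pointwise

variable [Fintype ι] {μ : ι → ℝ} {t : ℕ}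

noncomputable def fracSupport (μ : ι → ℝ) : Finset ι := univ.filter fun n => μ n ≠ 0 ∧ μ n ≠ 1

theorem sum_eq_sum_fracSupport_add_card (μ : ι → ℝ) :
    ∑ n, μ n = ∑ n ∈ fracSupport μ, μ n + #(univ.filter fun n => μ n = 1) := by
  have hsplit : ∀ n, μ n = (if n ∈ fracSupport μ then μ n else 0) + if μ n = 1 then 1 else 0 := by
    intro n
    by_cases h1 : μ n = 1
    · simp [fracSupport, h1]
    · by_cases h0 : μ n = 0 <;> simp [fracSupport, h0, h1]
  rw [sum_congr rfl fun n _ => hsplit n, sum_add_distrib, sum_ite_mem, univ_inter, sum_boole]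

theorem hasFilling_of_fracSupport_eq_empty (h : fracSupport μ = ∅) (hts : (t : ℝ) = ∑ n, μ n) :
    HasFilling t 1 μ := by
  set S := univ.filter fun n => μ n = 1
  have hS : #S = t := by
    rw [sum_eq_sum_fracSupport_add_card, h, sum_empty, zero_add] at hts
    exact_mod_cast hts.symm
  convert hasFilling_one hS with n
  have : n ∉ fracSupport μ := h ▸ notMem_empty n
  by_cases h1 : μ n = 1 <;> simp_all [S, fracSupport]

theorem card_fracSupport_ne_one (hμ0 : ∀ n, 0 ≤ μ n) (hμ1 : ∀ n, μ n ≤ 1)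
    (hts : (t : ℝ) = ∑ n, μ n) : #(fracSupport μ) ≠ 1 := by
  intro hcard
  obtain ⟨n, hn⟩ := card_eq_one.mp hcard
  have hfrac : μ n ≠ 0 ∧ μ n ≠ 1 := by
    have : n ∈ fracSupport μ := hn ▸ mem_singleton_self n
    simpa [fracSupport] using this
  set c := #(univ.filter fun n => μ n = 1)
  rw [sum_eq_sum_fracSupport_add_card, hn, sum_singleton] at hts
  have hlt : (c : ℝ) < t := by linarith [lt_of_le_of_ne (hμ0 n) (Ne.symm hfrac.1)]
  have hgt : (t : ℝ) < c + 1 := by linarith [lt_of_le_of_ne (hμ1 n) hfrac.2]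
  norm_cast at hlt hgt
  omega

omit [DecidableEq ι] in
theorem exists_card_eq_between_ones_and_support (hμ0 : ∀ n, 0 ≤ μ n) (hμ1 : ∀ n, μ n ≤ 1)
    (hts : (t : ℝ) = ∑ n, μ n) :
    ∃ S : Finset ι, #S = t ∧ (∀ n ∈ S, μ n ≠ 0) ∧ ∀ n, μ n = 1 → n ∈ S := by
  set ones := univ.filter fun n => μ n = 1
  set supp := univ.filter fun n => μ n ≠ 0
  have hones : (#ones : ℝ) ≤ t := by
    rw [hts, ← sum_boole]
    refine sum_le_sum fun n _ => ?_
    split_ifs with h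
    exacts [h.ge, hμ0 n]
  have hsupp : (t : ℝ) ≤ #supp := by
    rw [hts, ← sum_boole]
    refine sum_le_sum fun n _ => ?_
    split_ifs with h
    exacts [hμ1 n, (not_not.mp h).le]
  obtain ⟨S, honesS, hSsupp, hS⟩ := exists_subsuperset_card_eq
    (show ones ⊆ supp from monotone_filter_right _ fun n _ h => by simp [h])
    (by exact_mod_cast hones) (by exact_mod_cast hsupp)
  exact ⟨S, hS, fun n hn => (mem_filter.mp (hSsupp hn)).2,
    fun n hn => honesS (mem_filter.mpr ⟨mem_univ n, hn⟩)⟩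

theorem sum_peel {S : Finset ι} {a : ℝ} (ha : a ≠ 1) (hS : #S = t) (hts : (t : ℝ) = ∑ n, μ n) :
    (t : ℝ) = ∑ n, peel μ S a n := by
  have h1a : 1 - a ≠ 0 := sub_ne_zero.mpr ha.symm
  simp only [peel, ← sum_div, sum_sub_distrib, sum_ite_mem, univ_inter, sum_const, hS,
    nsmul_eq_mul, ← hts]
  field_simp

theorem exists_eq_add_mul_peel (hμ0 : ∀ n, 0 ≤ μ n) (hμ1 : ∀ n, μ n ≤ 1)
    (hts : (t : ℝ) = ∑ n, μ n) (hne : (fracSupport μ).Nonempty) :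
    ∃ (S : Finset ι) (a : ℝ) (ν : ι → ℝ), #S = t ∧ 0 < a ∧ a < 1 ∧
      (∀ n, 0 ≤ ν n) ∧ (∀ n, ν n ≤ 1) ∧ (t : ℝ) = ∑ n, ν n ∧
      #(fracSupport ν) < #(fracSupport μ) ∧
      μ = fun n => (if n ∈ S then a else 0) + (1 - a) * ν n := by
  obtain ⟨S, hS, hS0, hS1⟩ := exists_card_eq_between_ones_and_support hμ0 hμ1 hts
  have hfrac : ∀ n ∈ fracSupport μ, μ n ≠ 0 ∧ μ n ≠ 1 := fun n hn => (mem_filter.mp hn).2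
  set a := (fracSupport μ).inf' hne (slack μ S)
  obtain ⟨m, hm, hma⟩ : ∃ m ∈ fracSupport μ, a = slack μ S m := exists_mem_eq_inf' hne _
  have ha : a ∈ Set.Ioo 0 1 := hma ▸ slack_mem_Ioo (hμ0 m) (hμ1 m) (hfrac m hm).1 (hfrac m hm).2
  have ha1 : a ≠ 1 := ha.2.ne
  have hpeel_of_not_frac : ∀ n ∉ fracSupport μ, peel μ S a n = 0 ∨ peel μ S a n = 1 := by
    intro n hn
    by_cases h1 : μ n = 1
    · exact .inr (peel_eq_one ha1 (hS1 n h1) h1)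
    · have h0 : μ n = 0 := by simpa [fracSupport, h1] using hn
      exact .inl (peel_eq_zero (fun h => hS0 n h h0) h0)
  have hpeel_Icc : ∀ n, peel μ S a n ∈ Set.Icc 0 1 := by
    intro n
    by_cases hn : n ∈ fracSupport μ
    · exact peel_mem_Icc ha.2 (hμ0 n) (hμ1 n) (inf'_le _ hn)
    · rcases hpeel_of_not_frac n hn with h | h <;> simp [h]
  have hsub : fracSupport (peel μ S a) ⊆ (fracSupport μ).erase m := by
    intro n hn
    have hn' := (mem_filter.mp hn).2
    refine mem_erase.mpr ⟨?_, ?_⟩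
    · rintro rfl
      rcases peel_eq_zero_or_one ha1 hma.symm with h | h
      exacts [hn'.1 h, hn'.2 h]
    · by_contra hnot
      rcases hpeel_of_not_frac n hnot with h | h
      exacts [hn'.1 h, hn'.2 h]
  refine ⟨S, a, peel μ S a, hS, ha.1, ha.2, fun n => (hpeel_Icc n).1, fun n => (hpeel_Icc n).2,
    sum_peel ha1 hS hts, ?_, funext fun n => (add_mul_peel ha1).symm⟩
  calc #(fracSupport (peel μ S a)) ≤ #((fracSupport μ).erase m) := card_le_card hsub
    _ < #(fracSupport μ) := card_erase_lt_of_mem hm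

theorem exists_hasFilling (hμ0 : ∀ n, 0 ≤ μ n) (hμ1 : ∀ n, μ n ≤ 1)
    (hts : (t : ℝ) = ∑ n, μ n) : ∃ F ≤ max #(fracSupport μ) 1, HasFilling t F μ := by
  induction hk : #(fracSupport μ) using Nat.strong_induction_on generalizing μ with
  | _ k ih =>
  rcases (fracSupport μ).eq_empty_or_nonempty with h | hne
  · exact ⟨1, le_max_right _ _, hasFilling_of_fracSupport_eq_empty h hts⟩
  · have hk1 : k ≠ 1 := hk ▸ card_fracSupport_ne_one hμ0 hμ1 hts
    obtain ⟨S, a, ν, hS, ha0, ha1, hν0, hν1, hνs, hlt, rfl⟩ :=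
      exists_eq_add_mul_peel hμ0 hμ1 hts hne
    obtain ⟨F, hF, hν⟩ := ih _ (hk ▸ hlt) hν0 hν1 hνs rfl
    exact ⟨F + 1, by omega, hν.cons hS ha0 (sub_pos.mpr ha1)⟩

theorem stmt_6_general (N : ℕ) (hN : 0 < N) (μ : Fin N → ℝ)
    (hμ0 : ∀ n, 0 ≤ μ n) (hμ1 : ∀ n, μ n ≤ 1)
    (t : ℕ) (hts : (t : ℝ) = ∑ n, μ n) :
    ∃ (F : ℕ), F ≤ N ∧
      ∃ (𝒩 : Fin F → Finset (Fin N)) (α : Fin F → ℝ),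
        (∀ f, (𝒩 f).card = t) ∧ (∀ f, 0 < α f) ∧
        ∀ n : Fin N, ∑ f ∈ Finset.univ.filter (fun f => n ∈ 𝒩 f), α f = μ n := by
  obtain ⟨F, hF, hfill⟩ := exists_hasFilling hμ0 hμ1 hts
  have hk : #(fracSupport μ) ≤ N := (card_le_univ _).trans (Fintype.card_fin N).le
  exact ⟨F, hF.trans (max_le hk hN), hfill⟩

theorem stmt_6 (N : ℕ) (hN : 0 < N) (μ : Fin N → ℝ)
    (hμ0 : ∀ n, 0 ≤ μ n) (hμ1 : ∀ n, μ n ≤ 1)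
    (t : ℕ) (ht : 0 < t) (hts : (t : ℝ) = ∑ n, μ n) :
    ∃ (F : ℕ), F ≤ N ∧
      ∃ (𝒩 : Fin F → Finset (Fin N)) (α : Fin F → ℝ),
        (∀ f, (𝒩 f).card = t) ∧ (∀ f, 0 < α f) ∧
        ∀ n : Fin N, ∑ f ∈ Finset.univ.filter (fun f => n ∈ 𝒩 f), α f = μ n :=
  stmt_6_general N hN μ hμ0 hμ1 t hts
end

section
/- Let N and t be positive integers with t ≤ N, and let m ∈ ℝ^N have nonnegative entries arranged in nondecreasing order (m[1] ≤ m[2] ≤ ⋯ ≤ m[N]). Let t' = Σ_{n=1}^{N} m[n], let N' be the number of indices n with m[n] > 0, and suppose: (i) t·m[n] ≤ t' for all n; (ii) N' ≥ t+1; and (iii) exactly t−1 indices n satisfy t·m[n] = t'. Then m[N−N'+1] ≤ t'/t − m[N−t+1]; that is, the iteration of the placement algorithm completely fills the database with the smallest remaining nonzero storage (a complete fill), since min(t'/t − m[N−t+1], m[N−N'+1]) = m[N−N'+1]. -/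
/-!
Exactly `t - 1` entries attain the upper bound `t'/t`, and by monotonicity they are the top
`t - 1` entries. The other `N - t + 1` entries therefore sum to `t'/t`; since `N' > t`, the
entries `m[N - N' + 1]` and `m[N - t + 1]` are two distinct ones among them, and both are
nonnegative.
-/

open Finset

theorem Fin.apply_eq_of_card_filter_eq {N k : ℕ} {β : Type*} [PartialOrder β] [DecidableEq β]
    {f : Fin N → β} (hf : Monotone f) {c : β} (hle : ∀ n, f n ≤ c)
    (hk : #{n | f n = c} = k) {n : Fin N} (hn : N ≤ n + k) : f n = c := by
  by_contra hne
  have hlt : f n < c := lt_of_le_of_ne (hle n) hne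
  have hsub : ({x | f x = c} : Finset (Fin N)) ⊆ Ioi n := by
    intro x hx
    rw [mem_filter] at hx
    exact mem_Ioi.mpr (lt_of_not_ge fun hxn => (hf hxn).not_gt (hx.2 ▸ hlt))
  have hcard := card_le_card hsub
  rw [hk, Fin.card_Ioi] at hcard
  omega

theorem stmt_7 (N t : ℕ) (ht : 0 < t) (htN : t ≤ N)
    (m : Fin N → ℝ) (hm : ∀ n, 0 ≤ m n) (hmono : Monotone m)
    (t' : ℝ) (ht' : t' = ∑ n, m n)
    (N' : ℕ) (hN' : N' = (Finset.univ.filter (fun n => 0 < m n)).card)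
    (hcond : ∀ n, (t : ℝ) * m n ≤ t')
    (hN'big : t + 1 ≤ N')
    (he : (Finset.univ.filter (fun n => (t : ℝ) * m n = t')).card = t - 1) :
    m ⟨N - N', by omega⟩ ≤ t' / t - m ⟨N - t, by omega⟩ := by
  have hN'N : N' ≤ N := hN' ▸ (card_le_univ _).trans_eq (Fintype.card_fin N)
  have htR : (0 : ℝ) < t := Nat.cast_pos.mpr ht
  set a : Fin N := ⟨N - t, by omega⟩
  set b : Fin N := ⟨N - N', by omega⟩
  have hba : b < a := Fin.lt_def.mpr (by simp only [a, b]; omega)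
  have htop : ∀ k ∈ Ioi a, m k = t' / t := fun k hk => by
    have hka : N - t < k := Fin.lt_def.mp (mem_Ioi.mp hk)
    rw [eq_div_iff htR.ne', mul_comm]
    exact Fin.apply_eq_of_card_filter_eq (hmono.const_mul htR.le) hcond he (by omega)
  have hsum_top : ∑ k ∈ Ioi a, m k = ((t : ℝ) - 1) * (t' / t) := by
    have hcard : #(Ioi a) = t - 1 := by rw [Fin.card_Ioi]; simp only [a]; omega
    rw [sum_congr rfl htop, sum_const, hcard, nsmul_eq_mul, Nat.cast_sub ht, Nat.cast_one]
  have hbound : m b + m a + ∑ k ∈ Ioi a, m k ≤ t' := by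
    have hb : b ∉ insert a (Ioi a) := by simp [hba]
    calc m b + m a + ∑ k ∈ Ioi a, m k = ∑ k ∈ insert b (insert a (Ioi a)), m k := by
          rw [sum_insert hb, sum_insert (by simp), add_assoc]
      _ ≤ t' := ht' ▸ sum_le_univ_sum_of_nonneg hm
  have ht_mul : (t : ℝ) * (t' / t) = t' := mul_div_cancel₀ t' htR.ne'
  rw [hsum_top] at hbound
  linarith
end

section
/- Let N and t be positive integers with t ≤ N, and let m ∈ ℝ^N have nonnegative entries arranged in nondecreasing order (m[1] ≤ m[2] ≤ ⋯ ≤ m[N]). Let t' = Σ_{n=1}^{N} m[n], let N' be the number of indices n with m[n] > 0, and let e be the number of indices n with t·m[n] = t'. Suppose t·m[n] ≤ t' for all n, N' ≥ t+1, and e ≤ t−1. Set α = min(t'/t − m[N−t+1], m[N−N'+1]), define m' ∈ ℝ^N by m'[n] = m[n] − α for n = N−N'+1 and for n ∈ {N−t+2, …, N}, and m'[n] = m[n] otherwise, and set t'' = t' − t·α. Then the number of indices n with t·m'[n] = t'' is at least e. -/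
/-! Since `m` is monotone and `t * m n ≤ t'` for all `n`, the indices attaining `t * m n = t'`
form a terminal segment of `Fin N`. It has `e ≤ t - 1` elements, so it lies among the `t - 1`
largest indices, each of which is lowered by `α`; subtracting `t * α` from `t'` keeps the
equality there. -/

open Finset

theorem Finset.Ici_subset_filter_eq_of_monotone {ι β : Type*} [Preorder ι]
    [LocallyFiniteOrderTop ι] [Fintype ι] [PartialOrder β] [DecidableEq β] {f : ι → β}
    (hf : Monotone f) {c : β} (hc : ∀ i, f i ≤ c) {n : ι} (hn : f n = c) :
    Ici n ⊆ univ.filter (fun i => f i = c) := by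
  intro i hi
  simp only [mem_filter, mem_univ, true_and]
  exact le_antisymm (hc i) (hn ▸ hf (mem_Ici.mp hi))

theorem Fin.sub_card_le_of_Ici_subset {N : ℕ} {s : Finset (Fin N)} {n : Fin N}
    (h : Ici n ⊆ s) : N - s.card ≤ n := by
  have := card_le_card h
  rw [Fin.card_Ici] at this
  omega

theorem stmt_8 (N t : ℕ) (htN : t ≤ N)
    (m : Fin N → ℝ) (hmono : Monotone m)
    (t' : ℝ)
    (N' : ℕ)
    (e : ℕ) (he : e = (Finset.univ.filter (fun n => (t : ℝ) * m n = t')).card)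
    (hcond : ∀ n, (t : ℝ) * m n ≤ t')
    (hePF : e ≤ t - 1)
    (α : ℝ)
    (m' : Fin N → ℝ)
    (hm' : ∀ n : Fin N,
      m' n = if (n : ℕ) = N - N' ∨ N - t + 1 ≤ (n : ℕ) then m n - α else m n)
    (t'' : ℝ) (ht'' : t'' = t' - t * α) :
    e ≤ (Finset.univ.filter (fun n => (t : ℝ) * m' n = t'')).card := by
  subst he
  refine card_le_card fun n hn => ?_
  simp only [mem_filter, mem_univ, true_and] at hn ⊢
  have hmaximal := Ici_subset_filter_eq_of_monotone
    (hmono.const_mul (Nat.cast_nonneg t)) hcond hn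
  have hlowered : N - t + 1 ≤ (n : ℕ) := by
    have := Fin.sub_card_le_of_Ici_subset hmaximal
    omega
  rw [hm' n, if_pos (Or.inr hlowered), ht'', mul_sub, hn]
end

section
/- Let N and t be positive integers with t ≤ N, and let m ∈ ℝ^N have nonnegative entries arranged in nondecreasing order (m[1] ≤ m[2] ≤ ⋯ ≤ m[N]). Let t' = Σ_{n=1}^{N} m[n], let N' be the number of indices n with m[n] > 0, and let e be the number of indices n with t·m[n] = t'. Suppose t·m[n] ≤ t' for all n, N' ≥ t+1, e ≤ t−1, and additionally t'/t − m[N−t+1] < m[N−N'+1] (the iteration is a partial fill). Set α = t'/t − m[N−t+1], define m' ∈ ℝ^N by m'[n] = m[n] − α for n = N−N'+1 and for n ∈ {N−t+2, …, N}, and m'[n] = m[n] otherwise, and set t'' = t' − t·α. Then the number of indices n with t·m'[n] = t'' is at least e + 1. -/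
/-!
Since every `t * m n` is at most `t'` and `m` is monotone, the indices with `t * m n = t'` form an
upper set of `Fin N`; having at most `t - 1` elements, it lies inside the block of the last `t - 1`
indices, which all drop by `α`, so each of them still satisfies `t * m' n = t''`. The choice of
`α` makes index `N - t` newly satisfy the equality, while it is left untouched by the update
because the smallest nonzero entry sits strictly below it.
-/

open Finset

theorem Monotone.isUpperSet_setOf_eq_of_forall_le {α β : Type*} [Preorder α] [PartialOrder β]
    {f : α → β} (hf : Monotone f) {c : β} (hc : ∀ a, f a ≤ c) : IsUpperSet {a | f a = c} :=
  fun _ b hab ha => le_antisymm (hc b) (ha ▸ hf hab)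

theorem Fin.sub_card_le_of_mem_isUpperSet {N : ℕ} {s : Finset (Fin N)}
    (hs : IsUpperSet (s : Set (Fin N))) {n : Fin N} (hn : n ∈ s) : N - #s ≤ n := by
  have hIci : #(Ici n) ≤ #s := card_le_card (by simpa [← coe_subset] using hs.Ici_subset hn)
  rw [Fin.card_Ici] at hIci
  omega

theorem stmt_9 (N t : ℕ) (ht : 0 < t) (htN : t ≤ N)
    (m : Fin N → ℝ) (hmono : Monotone m)
    (t' : ℝ)
    (N' : ℕ) (hN' : N' = (Finset.univ.filter (fun n => 0 < m n)).card)
    (e : ℕ) (he : e = (Finset.univ.filter (fun n => (t : ℝ) * m n = t')).card)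
    (hcond : ∀ n, (t : ℝ) * m n ≤ t')
    (hN'big : t + 1 ≤ N')
    (hePF : e ≤ t - 1)
    (α : ℝ) (hα : α = t' / t - m ⟨N - t, by omega⟩)
    (m' : Fin N → ℝ)
    (hm' : ∀ n : Fin N,
      m' n = if (n : ℕ) = N - N' ∨ N - t + 1 ≤ (n : ℕ) then m n - α else m n)
    (t'' : ℝ) (ht'' : t'' = t' - t * α) :
    e + 1 ≤ (Finset.univ.filter (fun n => (t : ℝ) * m' n = t'')).card := by
  have hN'N : N' ≤ N := hN' ▸ (card_filter_le _ _).trans_eq (card_fin N)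
  set full := univ.filter (fun n => (t : ℝ) * m n = t')
  have hfull_upper : IsUpperSet (full : Set (Fin N)) := by
    rw [coe_filter_univ]
    exact (hmono.const_mul (Nat.cast_nonneg t)).isUpperSet_setOf_eq_of_forall_le hcond
  have hfull_late : ∀ n ∈ full, N - t + 1 ≤ (n : ℕ) := fun n hn => by
    have := Fin.sub_card_le_of_mem_isUpperSet hfull_upper hn
    omega
  set ν : Fin N := ⟨N - t, by omega⟩
  have hν_new : (t : ℝ) * m' ν = t'' := by
    have ht0 : (t : ℝ) ≠ 0 := by positivity
    rw [hm' ν, if_neg (by simp only [ν]; omega), ht'', hα]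
    field_simp
    ring
  have hν_old : ν ∉ full := fun hν => by
    have := hfull_late ν hν
    simp only [ν] at this
    omega
  have hsub : insert ν full ⊆ univ.filter (fun n => (t : ℝ) * m' n = t'') := by
    intro n hn
    rw [mem_filter_univ]
    rcases mem_insert.1 hn with rfl | hn
    · exact hν_new
    · rw [hm' n, if_pos (Or.inr (hfull_late n hn)), ht'', mul_sub, (mem_filter_univ _).1 hn]
  calc e + 1 = #(insert ν full) := by rw [card_insert_of_notMem hν_old, he]
    _ ≤ _ := card_le_card hsub
end

section
/- Let N and t be positive integers with t ≤ N, and let m ∈ ℝ^N have nonnegative entries arranged in nondecreasing order (m[1] ≤ m[2] ≤ ⋯ ≤ m[N]). Let t' = Σ_{n=1}^{N} m[n] and let N' be the number of indices n with m[n] > 0. Suppose t·m[n] ≤ t' for all n, and N' ≥ 2t. Then m[N−N'+1] + m[N−t+1] ≤ t'/t; that is, the iteration of the placement algorithm is a complete fill. -/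
/-!
The `t` entries of `m` starting at index `N - N'` are each at least `m[N - N']`, and the last `t`
entries are each at least `m[N - t]`. Since `N' ≤ N` and `N' ≥ 2t`, these two blocks are disjoint, so the total
`t'` is at least `t * (m[N - N'] + m[N - t])`.
-/

open Finset

theorem Fin.mul_add_le_sum_of_monotone {N t : ℕ} {m : Fin N → ℝ} (hm : ∀ n, 0 ≤ m n)
    (hmono : Monotone m) (a b : Fin N) (hab : (a : ℕ) + t ≤ b) (hbN : (b : ℕ) + t = N) :
    t * (m a + m b) ≤ ∑ n, m n := by
  let a' : Fin N := ⟨a + t, by omega⟩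
  have hIco : #(Ico a a') = t := by simp [Fin.card_Ico, a']
  have hIci : #(Ici b) = t := by rw [Fin.card_Ici]; omega
  have hdisj : Disjoint (Ico a a') (Ici b) := by
    simp only [disjoint_left, mem_Ico, mem_Ici, not_le, Fin.lt_def, Fin.le_def]
    intro x ⟨_, hx⟩
    exact hx.trans_le hab
  have hlow : t • m a ≤ ∑ i ∈ Ico a a', m i :=
    hIco ▸ card_nsmul_le_sum _ _ _ fun i hi => hmono (mem_Ico.mp hi).1
  have hhigh : t • m b ≤ ∑ i ∈ Ici b, m i :=
    hIci ▸ card_nsmul_le_sum _ _ _ fun i hi => hmono (mem_Ici.mp hi)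
  have hunion : ∑ i ∈ Ico a a' ∪ Ici b, m i ≤ ∑ n, m n :=
    sum_le_univ_sum_of_nonneg fun i => hm i
  rw [sum_union hdisj] at hunion
  rw [nsmul_eq_mul] at hlow hhigh
  linarith

theorem stmt_10 (N t : ℕ) (ht : 0 < t) (htN : t ≤ N)
    (m : Fin N → ℝ) (hm : ∀ n, 0 ≤ m n) (hmono : Monotone m)
    (t' : ℝ) (ht' : t' = ∑ n, m n)
    (N' : ℕ) (hN' : N' = (Finset.univ.filter (fun n => 0 < m n)).card)
    (hN'big : 2 * t ≤ N') :
    m ⟨N - N', by omega⟩ + m ⟨N - t, by omega⟩ ≤ t' / t := by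
  have hN'le : N' ≤ N := hN' ▸ (card_filter_le _ _).trans_eq (card_fin N)
  have key := Fin.mul_add_le_sum_of_monotone (t := t) hm hmono
    ⟨N - N', by omega⟩ ⟨N - t, by omega⟩ (by simp only; omega) (by simp only; omega)
  rw [le_div_iff₀ (by exact_mod_cast ht), ht']
  linarith
end

section
/- Let N and t be positive integers with t ≤ N, and let m ∈ ℝ^N have nonnegative entries arranged in nondecreasing order (m[1] ≤ m[2] ≤ ⋯ ≤ m[N]). Let t' = Σ_{n=1}^{N} m[n] and let N' be the number of indices n with m[n] > 0. Suppose t·m[n] ≤ t' for all n and N' ≥ t+1. Set α = min(t'/t − m[N−t+1], m[N−N'+1]), and define m' ∈ ℝ^N by m'[n] = m[n] − α for n = N−N'+1 and for n ∈ {N−t+2, …, N}, and m'[n] = m[n] otherwise. Then m'[n] ≥ 0 for all n, and t·m'[n] ≤ Σ_{i=1}^{N} m'[i] for all n; that is, after the iteration a filling-problem solution still exists for the remaining storage. -/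
/-!
An iteration removes `α` from exactly `t` databases, so the total drops by `t * α`. A database
that is lowered keeps `t * m[n] ≤ t'` after both sides lose `t * α`; the others sit at or below
`m[N-t+1]`, and `α ≤ t'/t - m[N-t+1]` is exactly what keeps them under the new total.
Nonnegativity holds because `m` is monotone, every lowered database lies at or above position
`N-N'+1`, and `α ≤ m[N-N'+1]`.
-/

open Finset

section LowerOn

variable {ι : Type*} (p : ι → Prop) [DecidablePred p] (m : ι → ℝ) (α : ℝ)

def lowerOn (i : ι) : ℝ := if p i then m i - α else m i

theorem sum_lowerOn [Fintype ι] : ∑ i, lowerOn p m α i = ∑ i, m i - #{i | p i} * α := by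
  simp only [lowerOn, sum_ite, sum_sub_distrib, sum_const, nsmul_eq_mul]
  rw [← sum_filter_add_sum_filter_not univ p m]
  ring

variable {p m α}

theorem lowerOn_nonneg (hα : ∀ i, p i → α ≤ m i) (hm : ∀ i, ¬ p i → 0 ≤ m i) (i : ι) :
    0 ≤ lowerOn p m α i := by
  unfold lowerOn
  split_ifs with hi
  · exact sub_nonneg.mpr (hα i hi)
  · exact hm i hi

theorem mul_lowerOn_le_sum [Fintype ι] {t : ℕ} (hcard : #{i | p i} = t)
    (hcond : ∀ i, t * m i ≤ ∑ j, m j) (hα : ∀ i, ¬ p i → t * (m i + α) ≤ ∑ j, m j) (i : ι) :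
    t * lowerOn p m α i ≤ ∑ j, lowerOn p m α j := by
  rw [sum_lowerOn, hcard]
  unfold lowerOn
  split_ifs with hi
  · linarith [hcond i]
  · linarith [hα i hi]

end LowerOn

theorem card_filter_fin_eq_or_le {N t k : ℕ} (ht : 0 < t) (hk : k + t ≤ N) :
    #{n : Fin N | (n : ℕ) = k ∨ N - t + 1 ≤ (n : ℕ)} = t := by
  have himage : ({n : Fin N | (n : ℕ) = k ∨ N - t + 1 ≤ (n : ℕ)} : Finset (Fin N)).map
      Fin.valEmbedding = insert k (Ico (N - t + 1) N) := by
    ext x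
    simp only [mem_map, mem_filter, mem_univ, true_and, Fin.valEmbedding_apply, mem_insert,
      mem_Ico]
    constructor
    · rintro ⟨n, hn, rfl⟩
      omega
    · intro hx
      exact ⟨⟨x, by omega⟩, by dsimp only; omega, rfl⟩
  rw [← card_map, himage, card_insert_of_notMem (by simp; omega), Nat.card_Ico]
  omega

theorem stmt_13 (N t : ℕ) (ht : 0 < t) (htN : t ≤ N)
    (m : Fin N → ℝ) (hm : ∀ n, 0 ≤ m n) (hmono : Monotone m)
    (t' : ℝ) (ht' : t' = ∑ n, m n)
    (N' : ℕ)
    (hcond : ∀ n, (t : ℝ) * m n ≤ t')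
    (hN'big : t + 1 ≤ N')
    (α : ℝ) (hα : α = min (t' / t - m ⟨N - t, by omega⟩) (m ⟨N - N', by omega⟩))
    (m' : Fin N → ℝ)
    (hm' : ∀ n : Fin N,
      m' n = if (n : ℕ) = N - N' ∨ N - t + 1 ≤ (n : ℕ) then m n - α else m n) :
    (∀ n, 0 ≤ m' n) ∧ ∀ n, (t : ℝ) * m' n ≤ ∑ i, m' i := by
  obtain rfl : m' = lowerOn (fun n : Fin N => (n : ℕ) = N - N' ∨ N - t + 1 ≤ (n : ℕ)) m α :=
    funext hm'
  subst ht'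
  have hcard := card_filter_fin_eq_or_le (N := N) ht (k := N - N') (by omega)
  have hα_top : (t : ℝ) * (m ⟨N - t, by omega⟩ + α) ≤ ∑ n, m n := by
    have : α + m ⟨N - t, by omega⟩ ≤ (∑ n, m n) / t := by linarith [hα ▸ min_le_left _ _]
    rw [le_div_iff₀ (by positivity)] at this
    linarith
  refine ⟨lowerOn_nonneg (fun n hn => ?_) (fun n _ => hm n),
    mul_lowerOn_le_sum hcard hcond (fun n hn => ?_)⟩
  · exact (hα ▸ min_le_right _ _).trans (hmono (Fin.le_def.mpr (by dsimp only; omega)))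
  · have hna : m n ≤ m ⟨N - t, by omega⟩ := hmono (Fin.le_def.mpr (by dsimp only; omega))
    exact (mul_le_mul_of_nonneg_left (by linarith) t.cast_nonneg).trans hα_top
end

section
/- Let N be a positive integer and μ ∈ ℝ^N with 0 ≤ μ[n] ≤ 1 for all n. Suppose t := Σ_{n=1}^{N} μ[n] satisfies t ≥ 1 and t is not an integer. Define m₁[n] = max(μ[n] − (t − ⌊t⌋), 0) and m₂[n] = max(μ[n] − (⌈t⌉ − t), 0) for all n, and set r = (⌊t⌋(⌈t⌉ − t) − Σ_{n=1}^{N} m₁[n]) / (t − Σ_{n=1}^{N} m₁[n] − Σ_{n=1}^{N} m₂[n]). Then the denominator t − Σ_n m₁[n] − Σ_n m₂[n] is strictly positive, and 0 ≤ r < 1. -/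
/-!
Write `f = fract t`, so that `t - ⌊t⌋ = f` and `⌈t⌉ - t = 1 - f`. For `x ∈ [0, 1]` one has
`x - [x - f]⁺ - [x - (1 - f)]⁺ = min (min x (1 - x)) (min f (1 - f))`, which is positive unless
`x ∈ {0, 1}`; since `t` is not an integer, some `μ[n]` lies strictly between `0` and `1`, so the
denominator is positive. The bound `[x - (1 - f)]⁺ ≤ f x` summed over `n` gives
`∑ m₂ ≤ f t < f ⌈t⌉`, which is `r < 1`. For `r ≥ 0`, let `S` be the set of `n` with `μ[n] > f` and
`c = #S`; then `∑ m₁ = ∑_S μ - c f ≤ min c t - c f`, and this is at most `⌊t⌋ (1 - f)` both when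
`c ≤ ⌊t⌋` and when `c ≥ ⌊t⌋ + 1`.
-/

open Finset

theorem max_sub_zero_le_one_sub_mul {x a : ℝ} (hx0 : 0 ≤ x) (hx1 : x ≤ 1) (ha0 : 0 ≤ a)
    (ha1 : a ≤ 1) : max (x - a) 0 ≤ (1 - a) * x :=
  max_le (by nlinarith) (mul_nonneg (sub_nonneg.2 ha1) hx0)

theorem sub_max_sub_zero_sub_max_sub_zero (x a : ℝ) :
    x - max (x - a) 0 - max (x - (1 - a)) 0 = min (min x (1 - x)) (min a (1 - a)) := by
  simp only [max_def, min_def]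
  split_ifs <;> linarith

theorem sub_natCast_mul_fract_le_floor_mul_one_sub_fract {s t : ℝ} (c : ℕ) (hsc : s ≤ c) (hst : s ≤ t) :
    s - c * Int.fract t ≤ ⌊t⌋ * (1 - Int.fract t) := by
  have hf0 := Int.fract_nonneg t
  have hf1 := Int.fract_lt_one t
  have ht : t = ⌊t⌋ + Int.fract t := (Int.floor_add_fract t).symm
  rcases le_or_gt (c : ℤ) ⌊t⌋ with hc | hc
  · have hcR : (c : ℝ) ≤ ⌊t⌋ := by exact_mod_cast hc
    nlinarith
  · have hcR : (⌊t⌋ : ℝ) + 1 ≤ c := by exact_mod_cast hc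
    nlinarith

theorem fract_sum_eq_zero_of_forall_eq_zero_or_eq_one {ι : Type*} [Fintype ι] {x : ι → ℝ}
    (hx : ∀ i, x i = 0 ∨ x i = 1) : Int.fract (∑ i, x i) = 0 := by
  refine Int.fract_eq_zero_iff.2 ⟨∑ i, ⌊x i⌋, ?_⟩
  push_cast
  refine sum_congr rfl fun i _ => ?_
  rcases hx i with h | h <;> simp [h]

section UnitInterval

variable {ι : Type*} [Fintype ι] {x : ι → ℝ} (hx0 : ∀ i, 0 ≤ x i) (hx1 : ∀ i, x i ≤ 1)
include hx0 hx1

theorem sum_sub_max_sub_fract_sub_max_pos (hfract : Int.fract (∑ i, x i) ≠ 0) :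
    0 < ∑ i, (x i - max (x i - Int.fract (∑ i, x i)) 0
      - max (x i - (1 - Int.fract (∑ i, x i))) 0) := by
  set f := Int.fract (∑ i, x i)
  have hf0 : 0 < f := lt_of_le_of_ne (Int.fract_nonneg _) (Ne.symm hfract)
  have hf1 : f < 1 := Int.fract_lt_one _
  simp only [sub_max_sub_zero_sub_max_sub_zero]
  obtain ⟨j, hj0, hj1⟩ : ∃ j, 0 < x j ∧ x j < 1 := by
    by_contra! h
    exact hfract <| fract_sum_eq_zero_of_forall_eq_zero_or_eq_one fun i =>
      (hx0 i).eq_or_lt.imp Eq.symm fun hi => (hx1 i).antisymm (h i hi)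
  refine sum_pos' (fun i _ => ?_) ⟨j, mem_univ j, ?_⟩
  · exact le_min (le_min (hx0 i) (sub_nonneg.2 (hx1 i))) (le_min hf0.le (sub_nonneg.2 hf1.le))
  · exact lt_min (lt_min hj0 (sub_pos.2 hj1)) (lt_min hf0 (sub_pos.2 hf1))

theorem sum_max_sub_fract_le :
    ∑ i, max (x i - Int.fract (∑ i, x i)) 0 ≤ ⌊∑ i, x i⌋ * (1 - Int.fract (∑ i, x i)) := by
  set f := Int.fract (∑ i, x i)
  set S := univ.filter fun i => f < x i
  have hsum : ∑ i, max (x i - f) 0 = ∑ i ∈ S, x i - #S * f := by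
    rw [← nsmul_eq_mul, ← sum_const, ← sum_sub_distrib, sum_filter]
    refine sum_congr rfl fun i _ => ?_
    split_ifs with h
    · exact max_eq_left (sub_nonneg.2 h.le)
    · exact max_eq_right (sub_nonpos.2 (not_lt.1 h))
  rw [hsum]
  refine sub_natCast_mul_fract_le_floor_mul_one_sub_fract _ ?_ ?_
  · simpa using sum_le_sum fun i (_ : i ∈ S) => hx1 i
  · exact sum_le_sum_of_subset_of_nonneg (filter_subset _ _) fun i _ _ => hx0 i

theorem sum_max_sub_one_sub_fract_lt (hfract : Int.fract (∑ i, x i) ≠ 0) :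
    ∑ i, max (x i - (1 - Int.fract (∑ i, x i))) 0
      < Int.fract (∑ i, x i) * (⌊∑ i, x i⌋ + 1) := by
  set f := Int.fract (∑ i, x i)
  have hf0 : 0 < f := lt_of_le_of_ne (Int.fract_nonneg _) (Ne.symm hfract)
  have hf1 : f < 1 := Int.fract_lt_one _
  calc ∑ i, max (x i - (1 - f)) 0
      ≤ ∑ i, (1 - (1 - f)) * x i := sum_le_sum fun i _ =>
        max_sub_zero_le_one_sub_mul (hx0 i) (hx1 i) (by linarith) (by linarith)
    _ = f * ∑ i, x i := by rw [← mul_sum]; ring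
    _ < f * (⌊∑ i, x i⌋ + 1) := mul_lt_mul_of_pos_left (Int.lt_floor_add_one _) hf0

end UnitInterval

theorem stmt_15_general (N : ℕ) (μ : Fin N → ℝ)
    (hμ0 : ∀ n, 0 ≤ μ n) (hμ1 : ∀ n, μ n ≤ 1)
    (t : ℝ) (ht : t = ∑ n, μ n) (htni : ¬ ∃ z : ℤ, (z : ℝ) = t)
    (m₁ m₂ : Fin N → ℝ)
    (hm₁ : ∀ n, m₁ n = max (μ n - (t - (⌊t⌋ : ℝ))) 0)
    (hm₂ : ∀ n, m₂ n = max (μ n - ((⌈t⌉ : ℝ) - t)) 0)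
    (r : ℝ)
    (hr : r = ((⌊t⌋ : ℝ) * ((⌈t⌉ : ℝ) - t) - ∑ n, m₁ n) /
      (t - ∑ n, m₁ n - ∑ n, m₂ n)) :
    0 < t - ∑ n, m₁ n - ∑ n, m₂ n ∧ 0 ≤ r ∧ r < 1 := by
  have hfract : Int.fract t ≠ 0 := Int.fract_ne_zero_iff.2 htni
  rw [Int.self_sub_floor] at hm₁
  rw [Int.ceil_sub_self_eq hfract] at hm₂ hr
  subst ht
  simp only [hm₁, hm₂] at hr ⊢
  set f := Int.fract (∑ n, μ n)
  have hden : 0 < ∑ n, μ n - ∑ n, max (μ n - f) 0 - ∑ n, max (μ n - (1 - f)) 0 := by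
    simpa only [sum_sub_distrib] using sum_sub_max_sub_fract_sub_max_pos hμ0 hμ1 hfract
  have hm₁_le := sum_max_sub_fract_le hμ0 hμ1
  have hm₂_lt := sum_max_sub_one_sub_fract_lt hμ0 hμ1 hfract
  subst hr
  refine ⟨hden, div_nonneg (sub_nonneg.2 hm₁_le) hden.le, (div_lt_one hden).2 ?_⟩
  have hsplit := Int.floor_add_fract (∑ n, μ n)
  linarith

theorem stmt_15 (N : ℕ) (hN : 0 < N) (μ : Fin N → ℝ)
    (hμ0 : ∀ n, 0 ≤ μ n) (hμ1 : ∀ n, μ n ≤ 1)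
    (t : ℝ) (ht : t = ∑ n, μ n) (ht1 : 1 ≤ t) (htni : ¬ ∃ z : ℤ, (z : ℝ) = t)
    (m₁ m₂ : Fin N → ℝ)
    (hm₁ : ∀ n, m₁ n = max (μ n - (t - (⌊t⌋ : ℝ))) 0)
    (hm₂ : ∀ n, m₂ n = max (μ n - ((⌈t⌉ : ℝ) - t)) 0)
    (r : ℝ)
    (hr : r = ((⌊t⌋ : ℝ) * ((⌈t⌉ : ℝ) - t) - ∑ n, m₁ n) /
      (t - ∑ n, m₁ n - ∑ n, m₂ n)) :
    0 < t - ∑ n, m₁ n - ∑ n, m₂ n ∧ 0 ≤ r ∧ r < 1 :=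
  stmt_15_general N μ hμ0 hμ1 t ht htni m₁ m₂ hm₁ hm₂ r hr
end

section
/- Let N be a positive integer and μ ∈ ℝ^N with 0 ≤ μ[n] ≤ 1 for all n. Suppose t := Σ_{n=1}^{N} μ[n] satisfies t ≥ 1 and t is not an integer. Then Σ_{n=1}^{N} max(μ[n] − (t − ⌊t⌋), 0) ≤ ⌊t⌋ · (⌈t⌉ − t). -/
open Finset

theorem Finset.sum_max_sub_zero_eq_sum_filter {ι : Type*} (s : Finset ι) (a : ι → ℝ) (c : ℝ) :
    ∑ i ∈ s, max (a i - c) 0 = ∑ i ∈ s with c < a i, (a i - c) := by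
  rw [sum_filter]
  refine sum_congr rfl fun i _ => ?_
  split_ifs with h
  · exact max_eq_left (sub_pos.mpr h).le
  · exact max_eq_right (sub_nonpos.mpr (not_lt.mp h))

/-- Only the entries above `f` contribute; if there are at most `k` of them each contributes at
most `1 - f`, and if there are more than `k` of them they already use up `(k + 1) f` of the
budget `k + f`. -/
theorem Finset.sum_max_sub_zero_le_mul_one_sub {ι : Type*} (s : Finset ι) (a : ι → ℝ) (k : ℤ)
    {f : ℝ} (hf0 : 0 ≤ f) (hf1 : f ≤ 1) (ha0 : ∀ i ∈ s, 0 ≤ a i) (ha1 : ∀ i ∈ s, a i ≤ 1)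
    (hsum : ∑ i ∈ s, a i ≤ k + f) :
    ∑ i ∈ s, max (a i - f) 0 ≤ k * (1 - f) := by
  rw [sum_max_sub_zero_eq_sum_filter]
  set S := s.filter (f < a ·)
  rcases le_or_gt (#S : ℤ) k with hcard | hcard
  · calc ∑ i ∈ S, (a i - f) ≤ ∑ _i ∈ S, (1 - f) :=
          sum_le_sum fun i hi => by linarith [ha1 i (mem_filter.mp hi).1]
      _ = #S * (1 - f) := by rw [sum_const, nsmul_eq_mul]
      _ ≤ k * (1 - f) := mul_le_mul_of_nonneg_right (by exact_mod_cast hcard) (by linarith)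
  · have hcard' : (k : ℝ) + 1 ≤ #S := by exact_mod_cast hcard
    have hS : ∑ i ∈ S, a i ≤ ∑ i ∈ s, a i :=
      sum_le_sum_of_subset_of_nonneg (filter_subset _ _) fun i hi _ => ha0 i hi
    calc ∑ i ∈ S, (a i - f) = ∑ i ∈ S, a i - #S * f := by
          rw [sum_sub_distrib, sum_const, nsmul_eq_mul]
      _ ≤ k + f - (k + 1) * f := by nlinarith
      _ = k * (1 - f) := by ring

theorem stmt_16_general (N : ℕ) (μ : Fin N → ℝ)
    (hμ0 : ∀ n, 0 ≤ μ n) (hμ1 : ∀ n, μ n ≤ 1)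
    (t : ℝ) (ht : t = ∑ n, μ n) (htni : ¬ ∃ z : ℤ, (z : ℝ) = t) :
    ∑ n, max (μ n - (t - (⌊t⌋ : ℝ))) 0 ≤ (⌊t⌋ : ℝ) * ((⌈t⌉ : ℝ) - t) := by
  have hfract : Int.fract t ≠ 0 := fun h => htni ⟨⌊t⌋, by linarith [Int.floor_add_fract t]⟩
  rw [Int.ceil_sub_self_eq hfract, ← Int.fract]
  exact univ.sum_max_sub_zero_le_mul_one_sub μ ⌊t⌋ (Int.fract_nonneg t)
    (Int.fract_lt_one t).le (fun n _ => hμ0 n) (fun n _ => hμ1 n)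
    (by rw [← ht, Int.floor_add_fract])

theorem stmt_16 (N : ℕ) (hN : 0 < N) (μ : Fin N → ℝ)
    (hμ0 : ∀ n, 0 ≤ μ n) (hμ1 : ∀ n, μ n ≤ 1)
    (t : ℝ) (ht : t = ∑ n, μ n) (ht1 : 1 ≤ t) (htni : ¬ ∃ z : ℤ, (z : ℝ) = t) :
    ∑ n, max (μ n - (t - (⌊t⌋ : ℝ))) 0 ≤ (⌊t⌋ : ℝ) * ((⌈t⌉ : ℝ) - t) :=
  stmt_16_general N μ hμ0 hμ1 t ht htni
end

section
/- Let N be a positive integer and μ ∈ ℝ^N with 0 ≤ μ[n] ≤ 1 for all n. Suppose t := Σ_{n=1}^{N} μ[n] satisfies t ≥ 1 and t is not an integer. Then Σ_{n=1}^{N} ( max(μ[n] − (t − ⌊t⌋), 0) + max(μ[n] − (⌈t⌉ − t), 0) ) < t, with strict inequality. -/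
/-! With `a = t - ⌊t⌋` and `b = ⌈t⌉ - t`, non-integrality of `t` gives `a, b > 0` and `a + b = 1`.
Pointwise, `(x - a)⁺ + (x - b)⁺ ≤ x` for `0 ≤ x ≤ a + b`, strictly when `0 < x < a + b`.
Summing over `n` gives the bound, and it is strict because some `μ[n]` lies in `(0, 1)`:
otherwise every `μ[n]` is `0` or `1` and `t` would be an integer. -/

open Set

lemma max_sub_add_max_sub_le_self {a b x : ℝ} (ha : 0 ≤ a) (hb : 0 ≤ b)
    (hx₀ : 0 ≤ x) (hx₁ : x ≤ a + b) : max (x - a) 0 + max (x - b) 0 ≤ x := by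
  rcases max_cases (x - a) 0 with ⟨h₁, _⟩ | ⟨h₁, _⟩ <;>
    rcases max_cases (x - b) 0 with ⟨h₂, _⟩ | ⟨h₂, _⟩ <;> linarith

lemma max_sub_add_max_sub_lt_self {a b x : ℝ} (ha : 0 < a) (hb : 0 < b)
    (hx₀ : 0 < x) (hx₁ : x < a + b) : max (x - a) 0 + max (x - b) 0 < x := by
  rcases max_cases (x - a) 0 with ⟨h₁, _⟩ | ⟨h₁, _⟩ <;>
    rcases max_cases (x - b) 0 with ⟨h₂, _⟩ | ⟨h₂, _⟩ <;> linarith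

lemma exists_mem_Ioo_of_sum_notMem_range_intCast {ι : Type*} [Fintype ι] {μ : ι → ℝ}
    (hμ : ∀ i, μ i ∈ Icc 0 1) (hsum : ∑ i, μ i ∉ range ((↑) : ℤ → ℝ)) :
    ∃ i, μ i ∈ Ioo 0 1 := by
  by_contra! h
  have hint : ∀ i, μ i ∈ range ((↑) : ℤ → ℝ) := fun i ↦ by
    rcases (hμ i).1.eq_or_lt with h₀ | hpos
    · exact ⟨0, by simp [← h₀]⟩
    · have h₁ : μ i = 1 := le_antisymm (hμ i).2 (not_lt.1 fun hlt ↦ h i ⟨hpos, hlt⟩)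
      exact ⟨1, by simp [h₁]⟩
  choose z hz using hint
  exact hsum ⟨∑ i, z i, by push_cast [hz]; rfl⟩

lemma sub_floor_add_ceil_sub_eq_one {t : ℝ} (ht : t ∉ range ((↑) : ℤ → ℝ)) :
    t - ⌊t⌋ + (⌈t⌉ - t) = 1 := by
  rw [(Int.ceil_eq_floor_add_one_iff_notMem t).2 ht]
  push_cast
  ring

theorem stmt_17_general (N : ℕ) (μ : Fin N → ℝ)
    (hμ0 : ∀ n, 0 ≤ μ n) (hμ1 : ∀ n, μ n ≤ 1)
    (t : ℝ) (ht : t = ∑ n, μ n) (htni : ¬ ∃ z : ℤ, (z : ℝ) = t) :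
    ∑ n, (max (μ n - (t - (⌊t⌋ : ℝ))) 0 + max (μ n - ((⌈t⌉ : ℝ) - t)) 0) < t := by
  have ha : 0 < t - ⌊t⌋ := sub_pos.2 (Int.floor_lt_self_iff.2 htni)
  have hab := sub_floor_add_ceil_sub_eq_one htni
  have hb : 0 < (⌈t⌉ : ℝ) - t := by linarith [Int.lt_floor_add_one t]
  obtain ⟨n₀, hn₀⟩ := exists_mem_Ioo_of_sum_notMem_range_intCast (fun n ↦ ⟨hμ0 n, hμ1 n⟩)
    (ht ▸ htni)
  conv_rhs => rw [ht]
  refine Finset.sum_lt_sum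
    (fun n _ ↦ max_sub_add_max_sub_le_self ha.le hb.le (hμ0 n) (hab ▸ hμ1 n))
    ⟨n₀, Finset.mem_univ n₀, max_sub_add_max_sub_lt_self ha hb hn₀.1 (hab ▸ hn₀.2)⟩

theorem stmt_17 (N : ℕ) (hN : 0 < N) (μ : Fin N → ℝ)
    (hμ0 : ∀ n, 0 ≤ μ n) (hμ1 : ∀ n, μ n ≤ 1)
    (t : ℝ) (ht : t = ∑ n, μ n) (ht1 : 1 ≤ t) (htni : ¬ ∃ z : ℤ, (z : ℝ) = t) :
    ∑ n, (max (μ n - (t - (⌊t⌋ : ℝ))) 0 + max (μ n - ((⌈t⌉ : ℝ) - t)) 0) < t :=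
  stmt_17_general N μ hμ0 hμ1 t ht htni
end
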